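/- At any optimum of the valley-filling problem (minimizing Σ_t (D(t) + Σ_n r_n(t))² subject to per-vehicle constraints), if no rate constraint is active for vehicle n at slots t and t', then the aggregate load L(t) = D(t) + Σ_m r_m(t) satisfies L(t) = L(t') (the optimal aggregate load is flat wherever charging rates are interior). -/

import Mathlib

/-!
If `L t' < L t` while vehicle `n` is strictly inside its rate bounds at both slots, moving a
small amount `ε` of its charge from `t` to `t'` keeps the schedule feasible (the budget is
unchanged) and changes the cost `∑ L²` by `2ε (L t' - L t) + 2ε²`, which is negative for small
`ε > 0`. Hence at an optimum `L t ≤ L t'`, and by symmetry `L t = L t'`.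
-/

open Finset

section ShiftCharge

variable {ι κ : Type*} [DecidableEq ι] [DecidableEq κ]

def shiftCharge (r : ι → κ → ℝ) (n : ι) (t t' : κ) (ε : ℝ) : ι → κ → ℝ :=
  r + Pi.single n (Pi.single t' ε - Pi.single t ε)

lemma sum_shiftCharge_apply [Fintype κ] (r : ι → κ → ℝ) (n : ι) (t t' : κ) (ε : ℝ) (m : ι) :
    ∑ s, shiftCharge r n t t' ε m s = ∑ s, r m s := by
  rcases eq_or_ne m n with rfl | hm
  · simp [shiftCharge, sum_add_distrib]
  · simp [shiftCharge, hm]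

lemma sum_shiftCharge_slot [Fintype ι] (r : ι → κ → ℝ) (n : ι) (t t' : κ) (ε : ℝ) (s : κ) :
    ∑ m, shiftCharge r n t t' ε m s
      = ∑ m, r m s + (Pi.single t' ε - Pi.single t ε : κ → ℝ) s := by
  simp only [shiftCharge, Pi.add_apply, sum_add_distrib, ← Finset.sum_apply, sum_pi_single',
    mem_univ, if_true]

lemma sum_sq_add_single_sub_single [Fintype κ] (L : κ → ℝ) {t t' : κ} (htt' : t ≠ t') (ε : ℝ) :
    ∑ s, (L s + (Pi.single t' ε - Pi.single t ε : κ → ℝ) s) ^ 2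
      = ∑ s, L s ^ 2 + 2 * ε * (L t' - L t) + 2 * ε ^ 2 := by
  have hsplit : ∀ s, (L s + (Pi.single t' ε - Pi.single t ε : κ → ℝ) s) ^ 2
      = L s ^ 2 + ((Pi.single t' (2 * ε * L t' + ε ^ 2) : κ → ℝ) s
        + (Pi.single t (-2 * ε * L t + ε ^ 2) : κ → ℝ) s) := by
    intro s
    rcases eq_or_ne s t with rfl | hs
    · simp only [Pi.sub_apply, Pi.single_eq_same, Pi.single_eq_of_ne htt', zero_sub, zero_add]
      ring
    rcases eq_or_ne s t' with rfl | hs'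
    · simp only [Pi.sub_apply, Pi.single_eq_same, Pi.single_eq_of_ne hs, sub_zero, add_zero]
      ring
    · simp [hs, hs']
  simp only [hsplit, sum_add_distrib, sum_pi_single', mem_univ, if_true]
  ring

variable [Fintype κ]

def feasibleSchedules (rmin rmax : ι → κ → ℝ) (B : ι → ℝ) : Set (ι → κ → ℝ) :=
  {r | (∀ n t, rmin n t ≤ r n t ∧ r n t ≤ rmax n t) ∧ ∀ n, ∑ t, r n t = B n}

lemma shiftCharge_mem_feasibleSchedules {rmin rmax : ι → κ → ℝ} {B : ι → ℝ}
    {r : ι → κ → ℝ} (hr : r ∈ feasibleSchedules rmin rmax B) {n : ι} {t t' : κ}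
    (htt' : t ≠ t') {ε : ℝ} (hε : 0 ≤ ε) (hεt : ε ≤ r n t - rmin n t)
    (hεt' : ε ≤ rmax n t' - r n t') :
    shiftCharge r n t t' ε ∈ feasibleSchedules rmin rmax B := by
  obtain ⟨hbounds, hbudget⟩ := hr
  refine ⟨fun m s => ?_, fun m => (sum_shiftCharge_apply r n t t' ε m).trans (hbudget m)⟩
  have hms := hbounds m s
  rcases eq_or_ne m n with rfl | hm
  · rcases eq_or_ne s t with rfl | hs
    · rw [show shiftCharge r m s t' ε m s = r m s - ε by simp [shiftCharge, htt', sub_eq_add_neg]]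
      constructor <;> linarith
    rcases eq_or_ne s t' with rfl | hs'
    · rw [show shiftCharge r m t s ε m s = r m s + ε by simp [shiftCharge, hs]]
      constructor <;> linarith
    · simpa [shiftCharge, hs, hs'] using hms
  · simpa [shiftCharge, hm] using hms

lemma load_le_of_isMinOn [Fintype ι] (D : κ → ℝ) {rmin rmax : ι → κ → ℝ} {B : ι → ℝ}
    {r : ι → κ → ℝ} (hr : r ∈ feasibleSchedules rmin rmax B)
    (hopt : IsMinOn (fun r : ι → κ → ℝ => ∑ s, (D s + ∑ m, r m s) ^ 2)
      (feasibleSchedules rmin rmax B) r)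
    {n : ι} {t t' : κ} (ht : rmin n t < r n t) (ht' : r n t' < rmax n t') :
    D t + ∑ m, r m t ≤ D t' + ∑ m, r m t' := by
  set L : κ → ℝ := fun s => D s + ∑ m, r m s
  by_contra! hlt
  have htt' : t ≠ t' := by
    rintro rfl
    exact lt_irrefl _ hlt
  -- `ε ≤ (L t - L t') / 2` makes the first-order gain outweigh the second-order cost `2ε²`.
  set ε := min (min (r n t - rmin n t) (rmax n t' - r n t')) ((L t - L t') / 2)
  have hε : 0 < ε := lt_min (lt_min (by linarith) (by linarith)) (by linarith)
  have hεhalf : ε ≤ (L t - L t') / 2 := min_le_right _ _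
  have hmem := shiftCharge_mem_feasibleSchedules hr htt' hε.le
    ((min_le_left _ _).trans (min_le_left _ _)) ((min_le_left _ _).trans (min_le_right _ _))
  have hcost : ∑ s, L s ^ 2 ≤ ∑ s, L s ^ 2 + 2 * ε * (L t' - L t) + 2 * ε ^ 2 :=
    calc ∑ s, L s ^ 2 ≤ ∑ s, (D s + ∑ m, shiftCharge r n t t' ε m s) ^ 2 := hopt hmem
      _ = ∑ s, (L s + (Pi.single t' ε - Pi.single t ε : κ → ℝ) s) ^ 2 := by
        simp only [sum_shiftCharge_slot, add_assoc, L]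
      _ = _ := sum_sq_add_single_sub_single L htt' ε
  nlinarith

end ShiftCharge

/-- at any optimum of the valley-filling problem, if no rate constraint
is active for some vehicle `n` at slots `t` and `t'`, then the optimal aggregate load
`L(t) = D(t) + Σ_m r_m(t)` is the same at `t` and `t'`. -/
theorem valley_filling_flat {N T : ℕ} (D : Fin T → ℝ)
    (rmin rmax : Fin N → Fin T → ℝ) (B : Fin N → ℝ)
    (r : Fin N → Fin T → ℝ)
    (hfeas : r ∈ {r : Fin N → Fin T → ℝ |
      (∀ n t, rmin n t ≤ r n t ∧ r n t ≤ rmax n t) ∧ ∀ n, ∑ t, r n t = B n})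
    (hopt : IsMinOn (fun r : Fin N → Fin T → ℝ => ∑ t, (D t + ∑ n, r n t) ^ 2)
      {r : Fin N → Fin T → ℝ |
        (∀ n t, rmin n t ≤ r n t ∧ r n t ≤ rmax n t) ∧ ∀ n, ∑ t, r n t = B n} r)
    (n : Fin N) (t t' : Fin T)
    (hint : rmin n t < r n t ∧ r n t < rmax n t)
    (hint' : rmin n t' < r n t' ∧ r n t' < rmax n t') :
    D t + ∑ m, r m t = D t' + ∑ m, r m t' :=
  le_antisymm (load_le_of_isMinOn D hfeas hopt hint.1 hint'.2)
    (load_le_of_isMinOn D hfeas hopt hint'.1 hint.2)
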